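/- arXiv:1101.1760 — 2 statements merged into one kernel-verified Lean document; each statement's English description precedes it below -/
import Mathlib

section
/- Lemma 5.2 (lower bound in the inactive regime). For the FA-1f model with two empty boundaries at density ρ∈(0,1) and for every α<0, liminf_{N→∞} φ^{(N)}(α/N) ≥ −Σ, where Σ is the two-boundary interface energy. -/
open Finset Filter

open scoped Classical

/-- A configuration on the box `{1,…,N}` (0-indexed by `Fin N`). -/
abbrev Config (N : ℕ) := Fin N → Bool

/-- Occupation variable `η_i ∈ {0,1}` as a real number. -/
noncomputable def occ {N : ℕ} (η : Config N) (i : Fin N) : ℝ := if η i then 1 else 0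

/-- Bernoulli(ρ) product weight of a configuration. -/
noncomputable def bern (ρ : ℝ) {N : ℕ} (η : Config N) : ℝ :=
  ∏ i, (if η i then ρ else 1 - ρ)

/-- Expectation under the Bernoulli(ρ) product measure `ν`. -/
noncomputable def expect (ρ : ℝ) {N : ℕ} (f : Config N → ℝ) : ℝ :=
  ∑ η : Config N, bern ρ η * f η

/-- The configuration `η^i`, obtained by flipping `η` at site `i`. -/
def flipAt {N : ℕ} (η : Config N) (i : Fin N) : Config N :=
  Function.update η i (!η i)

/-- Occupation at the 1-indexed position `k ∈ {0,…,N+1}`, with boundary value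
`bl` at `k = 0` and `br` at `k = N+1` (and beyond). -/
noncomputable def occAt {N : ℕ} (η : Config N) (bl br : ℝ) (k : ℕ) : ℝ :=
  if hk : k = 0 then bl
  else if h : k ≤ N then (if η ⟨k - 1, by omega⟩ then 1 else 0) else br

/-- The three kinetically constrained models considered: East (empty right boundary),
FA-1f with two empty boundaries, FA-1f with one empty (right) boundary. -/
inductive KCM | east | fa2 | fa1

/-- The kinetic constraint `r_i(η)` of each model, at the (0-indexed) site `i`. -/
noncomputable def constr (m : KCM) {N : ℕ} (η : Config N) (i : Fin N) : ℝ :=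
  match m with
  | KCM.east => 1 - occAt η 0 0 (i.1 + 2)
  | KCM.fa2  => 1 - occAt η 0 0 i.1 * occAt η 0 0 (i.1 + 2)
  | KCM.fa1  => 1 - occAt η 1 0 i.1 * occAt η 1 0 (i.1 + 2)

/-- The jump rate `c_i(η) = r_i(η)·[η_i(1−ρ)+(1−η_i)ρ]`. -/
noncomputable def crate (m : KCM) (ρ : ℝ) {N : ℕ} (η : Config N) (i : Fin N) : ℝ :=
  constr m η i * (if η i then 1 - ρ else ρ)

/-- The escape rate `𝓗(η) = Σ_i c_i(η)`. -/
noncomputable def escRate (m : KCM) (ρ : ℝ) {N : ℕ} (η : Config N) : ℝ :=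
  ∑ i, crate m ρ η i

/-- The Dirichlet form `𝒟_N(g) = Σ_i ν(c_i(η)(g(η^i)−g(η))²)`. -/
noncomputable def dirichlet (m : KCM) (ρ : ℝ) {N : ℕ} (g : Config N → ℝ) : ℝ :=
  ∑ i, expect ρ (fun η => crate m ρ η i * (g (flipAt η i) - g η) ^ 2)

/-- The rescaled cumulant generating function `φ^{(N)}(λ)`, via the
Donsker–Varadhan variational (principal eigenvalue) formula. -/
noncomputable def phi (m : KCM) (ρ : ℝ) (N : ℕ) (lam : ℝ) : ℝ :=
  sSup { x | ∃ f : Config N → ℝ, (∀ η, 0 ≤ f η) ∧ expect ρ f = 1 ∧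
    x = (Real.exp lam - 1) * expect ρ (fun η => f η * escRate m ρ η)
        - Real.exp lam * dirichlet m ρ (fun η => Real.sqrt (f η)) }

/-- The mean instantaneous activity `𝔸 = ν(c_j)` at an interior site `j`:
`2ρ(1−ρ)²` for East and `2ρ(1−ρ)(1−ρ²)` for FA-1f. -/
noncomputable def meanAct (m : KCM) (ρ : ℝ) : ℝ :=
  match m with
  | KCM.east => 2 * ρ * (1 - ρ) ^ 2
  | _ => 2 * ρ * (1 - ρ) * (1 - ρ ^ 2)

/-- The two-boundary interface energy `Σ_{L,L'}` for FA-1f with two empty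
boundaries: the infimum of `𝒟_{L+L'+2}(√f)` over probability densities `f`
with `ν(f·η_{L+1}η_{L+2}) = 1`. -/
noncomputable def SigmaTwo (ρ : ℝ) (L L' : ℕ) : ℝ :=
  sInf { x | ∃ f : Config (L + L' + 2) → ℝ, (∀ η, 0 ≤ f η) ∧ expect ρ f = 1 ∧
    expect ρ (fun η => f η * occ η ⟨L, by omega⟩ * occ η ⟨L + 1, by omega⟩) = 1 ∧
    x = dirichlet KCM.fa2 ρ (fun η => Real.sqrt (f η)) }

/-- The one-boundary interface energy `Σ_L`: the infimum of `𝒟_L(√f)`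
over probability densities `f` with `ν(f·η_1) = 1`, for the model `m`. -/
noncomputable def SigmaOne (m : KCM) (ρ : ℝ) (L : ℕ) : ℝ :=
  sInf { x | ∃ f : Config L → ℝ, (∀ η, 0 ≤ f η) ∧ expect ρ f = 1 ∧
    expect ρ (fun η => f η * occAt η 0 0 1) = 1 ∧
    x = dirichlet m ρ (fun η => Real.sqrt (f η)) }

-- ==================== auxiliary lemmas ====================
section Aux
variable {ρ : ℝ} {N : ℕ}

lemma bern_nonneg (h0 : 0 ≤ ρ) (h1 : ρ ≤ 1) (η : Config N) : 0 ≤ bern ρ η := by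
  unfold bern; exact Finset.prod_nonneg fun i _ => by split <;> linarith

lemma bern_pos (h0 : 0 < ρ) (h1 : ρ < 1) (η : Config N) : 0 < bern ρ η := by
  unfold bern; exact Finset.prod_pos fun i _ => by split <;> linarith

lemma occAt_nonneg (η : Config N) (k : ℕ) : 0 ≤ occAt η 0 0 k := by
  unfold occAt; split_ifs <;> norm_num

lemma occAt_le_one (η : Config N) (k : ℕ) : occAt η 0 0 k ≤ 1 := by
  unfold occAt; split_ifs <;> norm_num

lemma constr_fa2_nonneg (η : Config N) (i : Fin N) : 0 ≤ constr KCM.fa2 η i := by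
  have h1 := occAt_nonneg η i.1; have h2 := occAt_le_one η i.1
  have h3 := occAt_nonneg η (i.1 + 2); have h4 := occAt_le_one η (i.1 + 2)
  simp only [constr]; nlinarith

lemma constr_fa2_le_one (η : Config N) (i : Fin N) : constr KCM.fa2 η i ≤ 1 := by
  have h1 := occAt_nonneg η i.1; have h3 := occAt_nonneg η (i.1 + 2)
  simp only [constr]; nlinarith

lemma crate_fa2_nonneg (h0 : 0 ≤ ρ) (h1 : ρ ≤ 1) (η : Config N) (i : Fin N) :
    0 ≤ crate KCM.fa2 ρ η i := by
  unfold crate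
  exact mul_nonneg (constr_fa2_nonneg η i) (by split <;> linarith)

lemma crate_fa2_le_one (h0 : 0 ≤ ρ) (h1 : ρ ≤ 1) (η : Config N) (i : Fin N) :
    crate KCM.fa2 ρ η i ≤ 1 := by
  have := constr_fa2_nonneg η i; have := constr_fa2_le_one η i
  unfold crate; split <;> nlinarith

lemma escRate_fa2_nonneg (h0 : 0 ≤ ρ) (h1 : ρ ≤ 1) (η : Config N) :
    0 ≤ escRate KCM.fa2 ρ η :=
  Finset.sum_nonneg fun i _ => crate_fa2_nonneg h0 h1 η i

lemma expect_nonneg (h0 : 0 ≤ ρ) (h1 : ρ ≤ 1) {f : Config N → ℝ} (hf : ∀ η, 0 ≤ f η) :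
    0 ≤ expect ρ f :=
  Finset.sum_nonneg fun η _ => mul_nonneg (bern_nonneg h0 h1 η) (hf η)

lemma expect_mono (h0 : 0 ≤ ρ) (h1 : ρ ≤ 1) {f g : Config N → ℝ} (h : ∀ η, f η ≤ g η) :
    expect ρ f ≤ expect ρ g :=
  Finset.sum_le_sum fun η _ => mul_le_mul_of_nonneg_left (h η) (bern_nonneg h0 h1 η)

lemma expect_zero : expect ρ (fun _ : Config N => (0:ℝ)) = 0 := by
  unfold _root_.expect; simp

lemma expect_div_const (f : Config N → ℝ) (c : ℝ) :
    expect ρ (fun η => f η / c) = expect ρ f / c := by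
  unfold _root_.expect; rw [Finset.sum_div]; exact Finset.sum_congr rfl fun η _ => (mul_div_assoc _ _ _).symm

lemma dirichlet_fa2_nonneg (h0 : 0 ≤ ρ) (h1 : ρ ≤ 1) (g : Config N → ℝ) :
    0 ≤ dirichlet KCM.fa2 ρ g :=
  Finset.sum_nonneg fun i _ => expect_nonneg h0 h1 fun η =>
    mul_nonneg (crate_fa2_nonneg h0 h1 η i) (sq_nonneg _)

lemma phi_ge (h0 : 0 < ρ) (h1 : ρ < 1) (lam : ℝ) (hlam : lam < 0) (f : Config N → ℝ)
    (hf0 : ∀ η, 0 ≤ f η) (hf1 : expect ρ f = 1) :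
    (Real.exp lam - 1) * expect ρ (fun η => f η * escRate KCM.fa2 ρ η)
      - Real.exp lam * dirichlet KCM.fa2 ρ (fun η => Real.sqrt (f η))
      ≤ phi KCM.fa2 ρ N lam := by
  apply le_csSup
  · refine ⟨0, ?_⟩
    rintro x ⟨f', hf'0, hf'1, rfl⟩
    have h2 : 0 ≤ expect ρ (fun η => f' η * escRate KCM.fa2 ρ η) :=
      expect_nonneg h0.le h1.le fun η => mul_nonneg (hf'0 η) (escRate_fa2_nonneg h0.le h1.le η)
    have h3 : 0 ≤ dirichlet KCM.fa2 ρ (fun η => Real.sqrt (f' η)) :=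
      dirichlet_fa2_nonneg h0.le h1.le _
    have h4 : Real.exp lam < 1 := by
      rw [show (1:ℝ) = Real.exp 0 by simp]; exact Real.exp_lt_exp.2 hlam
    have h5 := Real.exp_pos lam
    nlinarith
  · exact ⟨f, hf0, hf1, rfl⟩

lemma phi_nonpos (h0 : 0 < ρ) (h1 : ρ < 1) (lam : ℝ) (hlam : lam < 0) :
    phi KCM.fa2 ρ N lam ≤ 0 := by
  apply Real.sSup_nonpos
  rintro x ⟨f', hf'0, hf'1, rfl⟩
  have h2 : 0 ≤ expect ρ (fun η => f' η * escRate KCM.fa2 ρ η) :=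
    expect_nonneg h0.le h1.le fun η => mul_nonneg (hf'0 η) (escRate_fa2_nonneg h0.le h1.le η)
  have h3 : 0 ≤ dirichlet KCM.fa2 ρ (fun η => Real.sqrt (f' η)) :=
    dirichlet_fa2_nonneg h0.le h1.le _
  have h4 : Real.exp lam < 1 := by
    rw [show (1:ℝ) = Real.exp 0 by simp]; exact Real.exp_lt_exp.2 hlam
  have h5 := Real.exp_pos lam
  nlinarith

end Aux

-- ==================== core embedding ====================
section Core
variable (L L' B : ℕ)

def emb (j : Fin (L + L' + 2)) : Fin (L + L' + 2 + B) :=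
  if h : j.1 ≤ L then ⟨j.1, by have := j.2; omega⟩ else ⟨j.1 + B, by have := j.2; omega⟩

def invemb (i : Fin (L + L' + 2 + B)) : Fin (L + L' + 2) :=
  if h : i.1 ≤ L then ⟨i.1, by omega⟩
  else if h2 : L + 1 + B ≤ i.1 then ⟨i.1 - B, by have := i.2; omega⟩
  else ⟨0, by omega⟩

def proj (η : Config (L + L' + 2 + B)) : Config (L + L' + 2) := fun j => η (emb L L' B j)

def isBulk (i : Fin (L + L' + 2 + B)) : Prop := L + 1 ≤ i.1 ∧ i.1 < L + 1 + B

def allB (η : Config (L + L' + 2 + B)) : Prop := ∀ i, isBulk L L' B i → η i = true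

noncomputable def ind (η : Config (L + L' + 2 + B)) : ℝ := if allB L L' B η then 1 else 0

noncomputable def fill (σ : Config (L + L' + 2)) : Config (L + L' + 2 + B) :=
  fun i => if isBulk L L' B i then true else σ (invemb L L' B i)

variable {L L' B}

lemma emb_val_le {j : Fin (L + L' + 2)} (h : j.1 ≤ L) : (emb L L' B j).1 = j.1 := by
  unfold emb; rw [dif_pos h]

lemma emb_val_gt {j : Fin (L + L' + 2)} (h : ¬ j.1 ≤ L) : (emb L L' B j).1 = j.1 + B := by
  unfold emb; rw [dif_neg h]

lemma emb_inj : Function.Injective (emb L L' B) := by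
  intro a b hab
  have h : (emb L L' B a).1 = (emb L L' B b).1 := congrArg Fin.val hab
  apply Fin.ext
  by_cases ha : a.1 ≤ L <;> by_cases hb : b.1 ≤ L
  · rw [emb_val_le ha, emb_val_le hb] at h; omega
  · rw [emb_val_le ha, emb_val_gt hb] at h; omega
  · rw [emb_val_gt ha, emb_val_le hb] at h; omega
  · rw [emb_val_gt ha, emb_val_gt hb] at h; omega

lemma not_bulk_emb (j : Fin (L + L' + 2)) : ¬ isBulk L L' B (emb L L' B j) := by
  unfold isBulk
  by_cases h : j.1 ≤ L
  · rw [emb_val_le h]; omega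
  · rw [emb_val_gt h]; omega

lemma emb_invemb {i : Fin (L + L' + 2 + B)} (hi : ¬ isBulk L L' B i) :
    emb L L' B (invemb L L' B i) = i := by
  unfold isBulk at hi
  unfold invemb
  by_cases h : i.1 ≤ L
  · rw [dif_pos h]; exact Fin.val_inj.1 (emb_val_le h)
  · rw [dif_neg h]
    have h2 : L + 1 + B ≤ i.1 := by omega
    rw [dif_pos h2]
    refine Fin.val_inj.1 ?_
    rw [emb_val_gt (by simp; omega)]
    simp; omega

lemma invemb_emb (j : Fin (L + L' + 2)) : invemb L L' B (emb L L' B j) = j :=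
  emb_inj (emb_invemb (not_bulk_emb j))

lemma proj_fill (σ : Config (L + L' + 2)) : proj L L' B (fill L L' B σ) = σ := by
  funext j
  unfold proj fill
  rw [if_neg (not_bulk_emb j), invemb_emb]

lemma fill_proj {η : Config (L + L' + 2 + B)} (hη : allB L L' B η) :
    fill L L' B (proj L L' B η) = η := by
  funext i
  unfold fill proj
  by_cases h : isBulk L L' B i
  · rw [if_pos h, hη i h]
  · rw [if_neg h, emb_invemb h]

lemma allB_fill (σ : Config (L + L' + 2)) : allB L L' B (fill L L' B σ) := by
  intro i hi; unfold fill; rw [if_pos hi]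

lemma compl_filter' :
    Finset.univ.filter (fun i => ¬ isBulk L L' B i) = Finset.image (emb L L' B) Finset.univ := by
  ext i
  simp only [Finset.mem_filter, Finset.mem_univ, true_and, Finset.mem_image]
  constructor
  · intro h; exact ⟨invemb L L' B i, emb_invemb h⟩
  · rintro ⟨j, -, rfl⟩; exact not_bulk_emb j

lemma card_bulk : (Finset.univ.filter (isBulk L L' B)).card = B := by
  have h1 := Finset.card_filter_add_card_filter_not
    (s := (Finset.univ : Finset (Fin (L + L' + 2 + B)))) (isBulk L L' B)
  rw [compl_filter', Finset.card_image_of_injective _ emb_inj] at h1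
  simp only [Finset.card_univ, Fintype.card_fin] at h1
  omega

lemma bern_split {ρ : ℝ} {η : Config (L + L' + 2 + B)} (hη : allB L L' B η) :
    bern ρ η = ρ ^ B * bern ρ (proj L L' B η) := by
  unfold bern
  rw [← Finset.prod_filter_mul_prod_filter_not Finset.univ (isBulk L L' B)]
  congr 1
  · have hc : ∀ i ∈ Finset.univ.filter (isBulk L L' B), (if η i = true then ρ else 1 - ρ) = ρ := by
      intro i hi; rw [hη i (Finset.mem_filter.1 hi).2]; simp
    rw [Finset.prod_congr rfl hc, Finset.prod_const, card_bulk]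
  · rw [compl_filter', Finset.prod_image (fun a _ b _ h => emb_inj h)]
    rfl

lemma key (ρ : ℝ) (F : Config (L + L' + 2) → ℝ) :
    expect ρ (fun η => F (proj L L' B η) * ind L L' B η) = ρ ^ B * expect ρ F := by
  unfold _root_.expect
  have e1 : ∀ η : Config (L + L' + 2 + B),
      bern ρ η * (F (proj L L' B η) * ind L L' B η)
      = if allB L L' B η then bern ρ η * F (proj L L' B η) else 0 := by
    intro η; unfold ind; split_ifs <;> ring
  calc (∑ η : Config (L + L' + 2 + B), bern ρ η * (F (proj L L' B η) * ind L L' B η))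
      = ∑ η ∈ Finset.univ.filter (allB L L' B), bern ρ η * F (proj L L' B η) := by
        rw [Finset.sum_filter]; exact Finset.sum_congr rfl fun η _ => e1 η
    _ = ∑ σ : Config (L + L' + 2), ρ ^ B * (bern ρ σ * F σ) := by
        refine Finset.sum_nbij' (proj L L' B) (fill L L' B) ?_ ?_ ?_ ?_ ?_
        · intro a _; exact Finset.mem_univ _
        · intro σ _; exact Finset.mem_filter.2 ⟨Finset.mem_univ _, allB_fill σ⟩
        · intro a ha; exact fill_proj (Finset.mem_filter.1 ha).2
        · intro σ _; exact proj_fill σ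
        · intro a ha
          rw [bern_split (Finset.mem_filter.1 ha).2]; ring
    _ = ρ ^ B * ∑ σ : Config (L + L' + 2), bern ρ σ * F σ := by rw [← Finset.mul_sum]

end Core

-- ==================== occAt evaluation ====================
section OccAt
variable {N : ℕ}

lemma occAt_zero' (η : Config N) : occAt η 0 0 0 = 0 := by unfold occAt; simp

lemma occAt_big (η : Config N) {k : ℕ} (hk0 : k ≠ 0) (hk : ¬ k ≤ N) : occAt η 0 0 k = 0 := by
  unfold occAt; rw [dif_neg hk0, dif_neg hk]

lemma occAt_succ (η : Config N) (j : Fin N) : occAt η 0 0 (j.1 + 1) = if η j then 1 else 0 := by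
  unfold occAt
  rw [dif_neg (Nat.succ_ne_zero _), dif_pos (by omega : j.1 + 1 ≤ N)]
  simp

lemma occAt_eq (η : Config N) (k : ℕ) (j : Fin N) (hk : k = j.1 + 1) :
    occAt η 0 0 k = if η j then 1 else 0 := by subst hk; exact occAt_succ η j

end OccAt

-- ==================== the test function g ====================
noncomputable def gfun (ρ : ℝ) (L L' B : ℕ) (f : Config (L + L' + 2) → ℝ)
    (η : Config (L + L' + 2 + B)) : ℝ :=
  f (proj L L' B η) * ind L L' B η / ρ ^ B

section G
variable {ρ : ℝ} {L L' B : ℕ} {f : Config (L + L' + 2) → ℝ}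

lemma ind_nonneg (η : Config (L + L' + 2 + B)) : 0 ≤ ind L L' B η := by
  unfold ind; split <;> norm_num

lemma gfun_nonneg (h0 : 0 < ρ) (hf0 : ∀ σ, 0 ≤ f σ) (η : Config (L + L' + 2 + B)) :
    0 ≤ gfun ρ L L' B f η :=
  div_nonneg (mul_nonneg (hf0 _) (ind_nonneg η)) (pow_nonneg h0.le B)

lemma gfun_zero {η : Config (L + L' + 2 + B)} (hη : ¬ allB L L' B η) :
    gfun ρ L L' B f η = 0 := by
  unfold gfun ind; rw [if_neg hη]; ring

lemma sqrt_gfun (hf0 : ∀ σ, 0 ≤ f σ) {η : Config (L + L' + 2 + B)} (hη : allB L L' B η) :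
    Real.sqrt (gfun ρ L L' B f η)
      = Real.sqrt (f (proj L L' B η)) / Real.sqrt (ρ ^ B) := by
  unfold gfun ind; rw [if_pos hη, mul_one, Real.sqrt_div (hf0 _)]

lemma expect_gfun (h0 : 0 < ρ) (hf1 : expect ρ f = 1) :
    expect ρ (gfun ρ L L' B f) = 1 := by
  have : gfun ρ L L' B f = fun η => (f (proj L L' B η) * ind L L' B η) / ρ ^ B := rfl
  rw [this, expect_div_const, key ρ f, hf1, mul_one]
  field_simp

lemma occupied_of (hsupp : ∀ σ : Config (L + L' + 2), f σ ≠ 0 →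
      σ ⟨L, by omega⟩ = true ∧ σ ⟨L + 1, by omega⟩ = true)
    {η : Config (L + L' + 2 + B)} (hη : allB L L' B η)
    (hfσ : f (proj L L' B η) ≠ 0) :
    ∀ k : Fin (L + L' + 2 + B), L ≤ k.1 → k.1 ≤ L + 1 + B → η k = true := by
  intro k hk1 hk2
  obtain ⟨hL, hL1⟩ := hsupp _ hfσ
  rcases Nat.lt_or_ge k.1 (L + 1) with h | h
  · have hk : k = emb L L' B ⟨L, by omega⟩ := by
      apply Fin.ext; rw [emb_val_le le_rfl]; show k.1 = L; omega
    rw [hk]; exact hL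
  · rcases Nat.lt_or_ge k.1 (L + 1 + B) with h2 | h2
    · exact hη k ⟨h, h2⟩
    · have hk : k = emb L L' B ⟨L + 1, by omega⟩ := by
        apply Fin.ext; rw [emb_val_gt (show ¬ L + 1 ≤ L by omega)]; show k.1 = L + 1 + B; omega
      rw [hk]; exact hL1

lemma constr_zero_of_occ {η : Config (L + L' + 2 + B)} (i : Fin (L + L' + 2 + B))
    (hil : 1 ≤ i.1) (hir : i.1 + 2 ≤ L + L' + 2 + B)
    (hm : η ⟨i.1 - 1, by omega⟩ = true) (hp : η ⟨i.1 + 1, by omega⟩ = true) :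
    constr KCM.fa2 η i = 0 := by
  have e1 : occAt η 0 0 i.1 = 1 := by
    rw [occAt_eq η i.1 ⟨i.1 - 1, by omega⟩ (show i.1 = i.1 - 1 + 1 by omega), hm]; simp
  have e2 : occAt η 0 0 (i.1 + 2) = 1 := by
    rw [occAt_eq η (i.1 + 2) ⟨i.1 + 1, by omega⟩ (show i.1 + 2 = i.1 + 1 + 1 by omega), hp]; simp
  simp only [constr, e1, e2]; ring

lemma flipAt_noteq {N : ℕ} {η : Config N} {i k : Fin N} (h : k ≠ i) : flipAt η i k = η k :=
  Function.update_of_ne h _ _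

lemma proj_flip_bulk {η : Config (L + L' + 2 + B)} {i : Fin (L + L' + 2 + B)}
    (hi : isBulk L L' B i) : proj L L' B (flipAt η i) = proj L L' B η := by
  funext j
  exact flipAt_noteq fun he => not_bulk_emb j (he ▸ hi)

lemma allB_flip_bulk_iff {η : Config (L + L' + 2 + B)} {j : Fin (L + L' + 2)} :
    allB L L' B (flipAt η (emb L L' B j)) ↔ allB L L' B η := by
  have hpt : ∀ i, isBulk L L' B i → flipAt η (emb L L' B j) i = η i := by
    intro i hi
    exact flipAt_noteq fun he => not_bulk_emb j (he ▸ hi)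
  constructor <;> intro h i hi
  · rw [← hpt i hi]; exact h i hi
  · rw [hpt i hi]; exact h i hi

lemma proj_flip_emb {η : Config (L + L' + 2 + B)} (j : Fin (L + L' + 2)) :
    proj L L' B (flipAt η (emb L L' B j)) = flipAt (proj L L' B η) j := by
  funext j'
  unfold proj flipAt
  by_cases h : j' = j
  · subst h; rw [Function.update_self, Function.update_self]
  · rw [Function.update_of_ne (fun he => h (emb_inj he)) _ _, Function.update_of_ne h _ _]

end G

section Match
variable {ρ : ℝ} {L L' B : ℕ}

lemma proj_apply' (η : Config (L + L' + 2 + B)) (jm : Fin (L + L' + 2))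
    (iN : Fin (L + L' + 2 + B)) (h : emb L L' B jm = iN) :
    proj L L' B η jm = η iN := by rw [← h]; rfl

lemma constr_emb {η : Config (L + L' + 2 + B)} (hP : allB L L' B η) (j : Fin (L + L' + 2))
    (hA : j.1 = L → 0 < B → proj L L' B η ⟨L + 1, by omega⟩ = true)
    (hB : j.1 = L + 1 → 0 < B → proj L L' B η ⟨L, by omega⟩ = true) :
    constr KCM.fa2 η (emb L L' B j) = constr KCM.fa2 (proj L L' B η) j := by
  have hj2 := j.2
  have EL : occAt η 0 0 (emb L L' B j).1 = occAt (proj L L' B η) 0 0 j.1 := by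
    by_cases hj : j.1 ≤ L
    · rw [emb_val_le hj]
      rcases Nat.eq_zero_or_pos j.1 with h0 | h0
      · rw [h0, occAt_zero', occAt_zero']
      · rw [occAt_eq η j.1 ⟨j.1 - 1, by omega⟩ (show j.1 = j.1 - 1 + 1 by omega),
            occAt_eq (proj L L' B η) j.1 ⟨j.1 - 1, by omega⟩ (show j.1 = j.1 - 1 + 1 by omega),
            proj_apply' η ⟨j.1 - 1, by omega⟩ ⟨j.1 - 1, by omega⟩
              (by apply Fin.ext; rw [emb_val_le (show j.1 - 1 ≤ L by omega)])]
    · rw [emb_val_gt hj]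
      rcases Nat.lt_or_ge (L + 1) j.1 with hgt | hle
      · rw [occAt_eq η (j.1 + B) ⟨j.1 + B - 1, by omega⟩ (show j.1 + B = j.1 + B - 1 + 1 by omega),
            occAt_eq (proj L L' B η) j.1 ⟨j.1 - 1, by omega⟩ (show j.1 = j.1 - 1 + 1 by omega),
            proj_apply' η ⟨j.1 - 1, by omega⟩ ⟨j.1 + B - 1, by omega⟩
              (by apply Fin.ext; rw [emb_val_gt (show ¬ j.1 - 1 ≤ L by omega)];
                  show j.1 - 1 + B = j.1 + B - 1; omega)]
      · have hj1 : j.1 = L + 1 := by omega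
        rw [occAt_eq η (j.1 + B) ⟨L + B, by omega⟩ (show j.1 + B = L + B + 1 by omega),
            occAt_eq (proj L L' B η) j.1 ⟨L, by omega⟩ (show j.1 = L + 1 by omega)]
        rcases Nat.eq_zero_or_pos B with h0 | h0
        · subst h0
          rw [proj_apply' η ⟨L, by omega⟩ ⟨L + 0, by omega⟩
            (by apply Fin.ext; rw [emb_val_le (show L ≤ L from le_rfl)]; show L = L + 0; omega)]
        · rw [hP ⟨L + B, by omega⟩ ⟨show L + 1 ≤ L + B by omega, show L + B < L + 1 + B by omega⟩,
              hB hj1 h0]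
  have ER : occAt η 0 0 ((emb L L' B j).1 + 2) = occAt (proj L L' B η) 0 0 (j.1 + 2) := by
    by_cases hj : j.1 + 1 ≤ L
    · rw [emb_val_le (by omega)]
      rw [occAt_eq η (j.1 + 2) ⟨j.1 + 1, by omega⟩ (show j.1 + 2 = j.1 + 1 + 1 by omega),
          occAt_eq (proj L L' B η) (j.1 + 2) ⟨j.1 + 1, by omega⟩ (show j.1 + 2 = j.1 + 1 + 1 by omega),
          proj_apply' η ⟨j.1 + 1, by omega⟩ ⟨j.1 + 1, by omega⟩
            (by apply Fin.ext; rw [emb_val_le (show j.1 + 1 ≤ L by omega)])]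
    · by_cases hjL : j.1 ≤ L
      · have hjL' : j.1 = L := by omega
        rw [emb_val_le hjL]
        rw [occAt_eq η (j.1 + 2) ⟨L + 1, by omega⟩ (show j.1 + 2 = L + 1 + 1 by omega),
            occAt_eq (proj L L' B η) (j.1 + 2) ⟨L + 1, by omega⟩ (show j.1 + 2 = L + 1 + 1 by omega)]
        rcases Nat.eq_zero_or_pos B with h0 | h0
        · subst h0
          rw [proj_apply' η ⟨L + 1, by omega⟩ ⟨L + 1, by omega⟩
            (by apply Fin.ext; rw [emb_val_gt (show ¬ L + 1 ≤ L by omega)])]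
        · rw [hP ⟨L + 1, by omega⟩ ⟨show L + 1 ≤ L + 1 from le_rfl, show L + 1 < L + 1 + B by omega⟩,
              hA hjL' h0]
      · rw [emb_val_gt hjL]
        by_cases hend : j.1 + 2 ≤ L + L' + 2
        · rw [occAt_eq η (j.1 + B + 2) ⟨j.1 + B + 1, by omega⟩ (show j.1 + B + 2 = j.1 + B + 1 + 1 by omega),
              occAt_eq (proj L L' B η) (j.1 + 2) ⟨j.1 + 1, by omega⟩ (show j.1 + 2 = j.1 + 1 + 1 by omega),
              proj_apply' η ⟨j.1 + 1, by omega⟩ ⟨j.1 + B + 1, by omega⟩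
                (by apply Fin.ext; rw [emb_val_gt (show ¬ j.1 + 1 ≤ L by omega)];
                    show j.1 + 1 + B = j.1 + B + 1; omega)]
        · rw [occAt_big η (by omega) (show ¬ j.1 + B + 2 ≤ L + L' + 2 + B by omega),
              occAt_big (proj L L' B η) (by omega) (show ¬ j.1 + 2 ≤ L + L' + 2 by omega)]
  simp only [constr]
  rw [EL, ER]

end Match

section Assemble
variable {ρ : ℝ} {L L' B : ℕ} {f : Config (L + L' + 2) → ℝ}

lemma gfun_ne_zero_facts (hρB : (ρ:ℝ) ^ B ≠ 0) {η : Config (L + L' + 2 + B)}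
    (hg : gfun ρ L L' B f η ≠ 0) :
    allB L L' B η ∧ f (proj L L' B η) ≠ 0 := by
  constructor
  · by_contra h; exact hg (gfun_zero h)
  · intro h; apply hg; unfold gfun; rw [h]; ring

lemma bulk_act_zero (h0 : 0 < ρ)
    (hsupp : ∀ σ : Config (L + L' + 2), f σ ≠ 0 →
      σ ⟨L, by omega⟩ = true ∧ σ ⟨L + 1, by omega⟩ = true)
    (i : Fin (L + L' + 2 + B)) (hi : isBulk L L' B i) (η : Config (L + L' + 2 + B)) :
    gfun ρ L L' B f η * crate KCM.fa2 ρ η i = 0 := by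
  by_cases hg : gfun ρ L L' B f η = 0
  · rw [hg, zero_mul]
  · obtain ⟨hη, hfσ⟩ := gfun_ne_zero_facts (pow_ne_zero B h0.ne') hg
    have hocc := occupied_of hsupp hη hfσ
    obtain ⟨hi1, hi2⟩ := hi
    have hc : constr KCM.fa2 η i = 0 := by
      apply constr_zero_of_occ i (by omega) (by omega)
      · exact hocc _ (show L ≤ i.1 - 1 by omega) (show i.1 - 1 ≤ L + 1 + B by omega)
      · exact hocc _ (show L ≤ i.1 + 1 by omega) (show i.1 + 1 ≤ L + 1 + B by omega)
    have : crate KCM.fa2 ρ η i = 0 := by unfold crate; rw [hc]; ring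
    rw [this, mul_zero]

lemma bulk_dir_zero (h0 : 0 < ρ)
    (hsupp : ∀ σ : Config (L + L' + 2), f σ ≠ 0 →
      σ ⟨L, by omega⟩ = true ∧ σ ⟨L + 1, by omega⟩ = true)
    (i : Fin (L + L' + 2 + B)) (hi : isBulk L L' B i) (η : Config (L + L' + 2 + B)) :
    crate KCM.fa2 ρ η i *
      (Real.sqrt (gfun ρ L L' B f (flipAt η i)) - Real.sqrt (gfun ρ L L' B f η)) ^ 2 = 0 := by
  obtain ⟨hi1, hi2⟩ := hi
  by_cases hg : gfun ρ L L' B f η = 0 ∧ gfun ρ L L' B f (flipAt η i) = 0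
  · rw [hg.1, hg.2, Real.sqrt_zero, sub_self]; ring
  · suffices hc : constr KCM.fa2 η i = 0 by unfold crate; rw [hc]; ring
    rcases not_and_or.1 hg with h | h
    · obtain ⟨hη, hfσ⟩ := gfun_ne_zero_facts (pow_ne_zero B h0.ne') h
      have hocc := occupied_of hsupp hη hfσ
      apply constr_zero_of_occ i (by omega) (by omega)
      · exact hocc _ (show L ≤ i.1 - 1 by omega) (show i.1 - 1 ≤ L + 1 + B by omega)
      · exact hocc _ (show L ≤ i.1 + 1 by omega) (show i.1 + 1 ≤ L + 1 + B by omega)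
    · obtain ⟨hη, hfσ⟩ := gfun_ne_zero_facts (pow_ne_zero B h0.ne') h
      have hocc := occupied_of hsupp hη hfσ
      apply constr_zero_of_occ i (by omega) (by omega)
      · rw [← flipAt_noteq (Fin.ne_of_val_ne (show i.1 - 1 ≠ i.1 by omega))
            (η := η) (i := i)]
        exact hocc _ (show L ≤ i.1 - 1 by omega) (show i.1 - 1 ≤ L + 1 + B by omega)
      · rw [← flipAt_noteq (Fin.ne_of_val_ne (show i.1 + 1 ≠ i.1 by omega))
            (η := η) (i := i)]
        exact hocc _ (show L ≤ i.1 + 1 by omega) (show i.1 + 1 ≤ L + 1 + B by omega)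

lemma nonbulk_dir (h0 : 0 < ρ) (hf0 : ∀ σ, 0 ≤ f σ)
    (hsupp : ∀ σ : Config (L + L' + 2), f σ ≠ 0 →
      σ ⟨L, by omega⟩ = true ∧ σ ⟨L + 1, by omega⟩ = true)
    (j : Fin (L + L' + 2)) (η : Config (L + L' + 2 + B)) :
    crate KCM.fa2 ρ η (emb L L' B j) *
      (Real.sqrt (gfun ρ L L' B f (flipAt η (emb L L' B j)))
        - Real.sqrt (gfun ρ L L' B f η)) ^ 2
    = (crate KCM.fa2 ρ (proj L L' B η) j *
        (Real.sqrt (f (flipAt (proj L L' B η) j)) - Real.sqrt (f (proj L L' B η))) ^ 2)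
        * ind L L' B η / ρ ^ B := by
  by_cases hP : allB L L' B η
  · have hPf : allB L L' B (flipAt η (emb L L' B j)) := allB_flip_bulk_iff.2 hP
    have h3 : ind L L' B η = 1 := by unfold ind; rw [if_pos hP]
    rw [sqrt_gfun hf0 hP, sqrt_gfun hf0 hPf, proj_flip_emb j, h3]
    have hdiff : Real.sqrt (f (flipAt (proj L L' B η) j)) / Real.sqrt (ρ ^ B)
        - Real.sqrt (f (proj L L' B η)) / Real.sqrt (ρ ^ B)
        = (Real.sqrt (f (flipAt (proj L L' B η) j)) - Real.sqrt (f (proj L L' B η)))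
          / Real.sqrt (ρ ^ B) := by ring
    rw [hdiff, div_pow, Real.sq_sqrt (pow_nonneg h0.le B)]
    by_cases hf : f (proj L L' B η) = 0 ∧ f (flipAt (proj L L' B η) j) = 0
    · rw [hf.1, hf.2, Real.sqrt_zero, sub_self]; ring
    · have hcr : crate KCM.fa2 ρ η (emb L L' B j) = crate KCM.fa2 ρ (proj L L' B η) j := by
        unfold crate
        have hflip : η (emb L L' B j) = proj L L' B η j := rfl
        rw [hflip]
        congr 1
        apply constr_emb hP j
        · intro hjL _
          rcases not_and_or.1 hf with h | h
          · exact (hsupp _ h).2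
          · have hx := (hsupp _ h).2
            rw [flipAt_noteq (Fin.ne_of_val_ne (show (L + 1 : ℕ) ≠ j.1 by omega))] at hx
            exact hx
        · intro hjL1 _
          rcases not_and_or.1 hf with h | h
          · exact (hsupp _ h).1
          · have hx := (hsupp _ h).1
            rw [flipAt_noteq (Fin.ne_of_val_ne (show (L : ℕ) ≠ j.1 by omega))] at hx
            exact hx
      rw [hcr]; ring
  · have h1 : gfun ρ L L' B f η = 0 := gfun_zero hP
    have h2 : gfun ρ L L' B f (flipAt η (emb L L' B j)) = 0 :=
      gfun_zero (fun h => hP (allB_flip_bulk_iff.1 h))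
    have h3 : ind L L' B η = 0 := by unfold ind; rw [if_neg hP]
    rw [h1, h2, h3, Real.sqrt_zero]; ring

end Assemble

section Assemble2
variable {ρ : ℝ} {L L' B : ℕ} {f : Config (L + L' + 2) → ℝ}

lemma dir_eq (h0 : 0 < ρ) (hf0 : ∀ σ, 0 ≤ f σ)
    (hsupp : ∀ σ : Config (L + L' + 2), f σ ≠ 0 →
      σ ⟨L, by omega⟩ = true ∧ σ ⟨L + 1, by omega⟩ = true) :
    dirichlet KCM.fa2 ρ (fun η => Real.sqrt (gfun ρ L L' B f η))
      = dirichlet KCM.fa2 ρ (fun σ => Real.sqrt (f σ)) := by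
  unfold dirichlet
  rw [← Finset.sum_filter_add_sum_filter_not Finset.univ (isBulk L L' B)]
  have hbulk : ∑ i ∈ Finset.univ.filter (isBulk L L' B),
      expect ρ (fun η => crate KCM.fa2 ρ η i *
        (Real.sqrt (gfun ρ L L' B f (flipAt η i)) - Real.sqrt (gfun ρ L L' B f η)) ^ 2) = 0 := by
    apply Finset.sum_eq_zero
    intro i hi
    have hz : (fun η => crate KCM.fa2 ρ η i *
        (Real.sqrt (gfun ρ L L' B f (flipAt η i)) - Real.sqrt (gfun ρ L L' B f η)) ^ 2)
        = fun _ => (0:ℝ) :=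
      funext (bulk_dir_zero h0 hsupp i (Finset.mem_filter.1 hi).2)
    rw [hz, expect_zero]
  rw [hbulk, zero_add, compl_filter', Finset.sum_image (fun a _ b _ h => emb_inj h)]
  apply Finset.sum_congr rfl
  intro j _
  have hpt : (fun η => crate KCM.fa2 ρ η (emb L L' B j) *
      (Real.sqrt (gfun ρ L L' B f (flipAt η (emb L L' B j)))
        - Real.sqrt (gfun ρ L L' B f η)) ^ 2)
      = fun η => ((fun σ => crate KCM.fa2 ρ σ j *
          (Real.sqrt (f (flipAt σ j)) - Real.sqrt (f σ)) ^ 2) (proj L L' B η)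
          * ind L L' B η) / ρ ^ B :=
    funext (fun η => nonbulk_dir h0 hf0 hsupp j η)
  rw [hpt]
  calc expect ρ (fun η => ((fun σ => crate KCM.fa2 ρ σ j *
          (Real.sqrt (f (flipAt σ j)) - Real.sqrt (f σ)) ^ 2) (proj L L' B η)
          * ind L L' B η) / ρ ^ B)
      = expect ρ (fun η => (fun σ => crate KCM.fa2 ρ σ j *
          (Real.sqrt (f (flipAt σ j)) - Real.sqrt (f σ)) ^ 2) (proj L L' B η)
          * ind L L' B η) / ρ ^ B := expect_div_const _ _
    _ = (ρ ^ B * expect ρ (fun σ => crate KCM.fa2 ρ σ j *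
          (Real.sqrt (f (flipAt σ j)) - Real.sqrt (f σ)) ^ 2)) / ρ ^ B := by
        rw [key ρ (fun σ => crate KCM.fa2 ρ σ j *
          (Real.sqrt (f (flipAt σ j)) - Real.sqrt (f σ)) ^ 2)]
    _ = expect ρ (fun σ => crate KCM.fa2 ρ σ j *
          (Real.sqrt (f (flipAt σ j)) - Real.sqrt (f σ)) ^ 2) := by
        field_simp

lemma act_nonneg (h0 : 0 < ρ) (h1 : ρ < 1) (hf0 : ∀ σ, 0 ≤ f σ) :
    0 ≤ expect ρ (fun η => gfun ρ L L' B f η * escRate KCM.fa2 ρ η) :=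
  expect_nonneg h0.le h1.le fun η =>
    mul_nonneg (gfun_nonneg h0 hf0 η) (escRate_fa2_nonneg h0.le h1.le η)

lemma act_le (h0 : 0 < ρ) (h1 : ρ < 1) (hf0 : ∀ σ, 0 ≤ f σ) (hf1 : expect ρ f = 1)
    (hsupp : ∀ σ : Config (L + L' + 2), f σ ≠ 0 →
      σ ⟨L, by omega⟩ = true ∧ σ ⟨L + 1, by omega⟩ = true) :
    expect ρ (fun η => gfun ρ L L' B f η * escRate KCM.fa2 ρ η) ≤ ((L + L' + 2 : ℕ) : ℝ) := by
  have hsplit : expect ρ (fun η => gfun ρ L L' B f η * escRate KCM.fa2 ρ η)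
      = ∑ i : Fin (L + L' + 2 + B), expect ρ (fun η => gfun ρ L L' B f η * crate KCM.fa2 ρ η i) := by
    unfold _root_.expect escRate
    calc (∑ η : Config (L + L' + 2 + B), bern ρ η * (gfun ρ L L' B f η * ∑ i, crate KCM.fa2 ρ η i))
        = ∑ η : Config (L + L' + 2 + B), ∑ i, bern ρ η * (gfun ρ L L' B f η * crate KCM.fa2 ρ η i) := by
          refine Finset.sum_congr rfl fun η _ => ?_
          rw [Finset.mul_sum, Finset.mul_sum]
      _ = _ := Finset.sum_comm
  rw [hsplit, ← Finset.sum_filter_add_sum_filter_not Finset.univ (isBulk L L' B)]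
  have hbulk0 : ∑ i ∈ Finset.univ.filter (isBulk L L' B),
      expect ρ (fun η => gfun ρ L L' B f η * crate KCM.fa2 ρ η i) = 0 := by
    apply Finset.sum_eq_zero
    intro i hi
    have hz : (fun η => gfun ρ L L' B f η * crate KCM.fa2 ρ η i) = fun _ => (0:ℝ) :=
      funext (bulk_act_zero h0 hsupp i (Finset.mem_filter.1 hi).2)
    rw [hz, expect_zero]
  rw [hbulk0, zero_add]
  have hcard : (Finset.univ.filter (fun i => ¬ isBulk L L' B i)).card = L + L' + 2 := by
    rw [compl_filter', Finset.card_image_of_injective _ emb_inj, Finset.card_univ,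
      Fintype.card_fin]
  calc ∑ i ∈ Finset.univ.filter (fun i => ¬ isBulk L L' B i),
        expect ρ (fun η => gfun ρ L L' B f η * crate KCM.fa2 ρ η i)
      ≤ ∑ _i ∈ Finset.univ.filter (fun i => ¬ isBulk L L' B i), (1:ℝ) := by
        apply Finset.sum_le_sum
        intro i _
        have hm : expect ρ (fun η => gfun ρ L L' B f η * crate KCM.fa2 ρ η i)
            ≤ expect ρ (gfun ρ L L' B f) :=
          expect_mono h0.le h1.le fun η =>
            mul_le_of_le_one_right (gfun_nonneg h0 hf0 η) (crate_fa2_le_one h0.le h1.le η i)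
        rw [expect_gfun h0 hf1] at hm
        exact hm
    _ = ((L + L' + 2 : ℕ) : ℝ) := by
        rw [Finset.sum_const, hcard, nsmul_eq_mul, mul_one]

lemma core_bound (h0 : 0 < ρ) (h1 : ρ < 1) (hf0 : ∀ σ, 0 ≤ f σ) (hf1 : expect ρ f = 1)
    (hsupp : ∀ σ : Config (L + L' + 2), f σ ≠ 0 →
      σ ⟨L, by omega⟩ = true ∧ σ ⟨L + 1, by omega⟩ = true)
    (lam : ℝ) (hlam : lam < 0) :
    (Real.exp lam - 1) * ((L + L' + 2 : ℕ) : ℝ)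
      - Real.exp lam * dirichlet KCM.fa2 ρ (fun σ => Real.sqrt (f σ))
      ≤ phi KCM.fa2 ρ (L + L' + 2 + B) lam := by
  have hφ := phi_ge h0 h1 lam hlam (gfun ρ L L' B f) (gfun_nonneg h0 hf0) (expect_gfun h0 hf1)
  rw [dir_eq h0 hf0 hsupp] at hφ
  refine le_trans ?_ hφ
  have hA1 := act_le h0 h1 hf0 hf1 hsupp (B := B)
  have hexp1 : Real.exp lam - 1 < 0 := by
    have : Real.exp lam < 1 := by
      rw [show (1:ℝ) = Real.exp 0 by simp]; exact Real.exp_lt_exp.2 hlam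
    linarith
  have hmul : (Real.exp lam - 1) * ((L + L' + 2 : ℕ) : ℝ)
      ≤ (Real.exp lam - 1) * expect ρ (fun η => gfun ρ L L' B f η * escRate KCM.fa2 ρ η) :=
    mul_le_mul_of_nonpos_left hA1 hexp1.le
  linarith

end Assemble2

-- ==================== SigmaTwo facts ====================
section Sigma
variable {ρ : ℝ}

lemma bern_allTrue {M : ℕ} (h0 : 0 < ρ) : bern ρ (fun _ : Fin M => true) = ρ ^ M := by
  unfold bern
  simp

lemma SigmaTwo_set_nonempty (h0 : 0 < ρ) (h1 : ρ < 1) (L L' : ℕ) :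
    { x | ∃ f : Config (L + L' + 2) → ℝ, (∀ η, 0 ≤ f η) ∧ expect ρ f = 1 ∧
      expect ρ (fun η => f η * occ η ⟨L, by omega⟩ * occ η ⟨L + 1, by omega⟩) = 1 ∧
      x = dirichlet KCM.fa2 ρ (fun η => Real.sqrt (f η)) }.Nonempty := by
  classical
  set T : Config (L + L' + 2) := fun _ => true with hT
  set f₀ : Config (L + L' + 2) → ℝ :=
    fun σ => if σ = T then (ρ ^ (L + L' + 2))⁻¹ else 0 with hf₀
  have hρM : (ρ : ℝ) ^ (L + L' + 2) ≠ 0 := pow_ne_zero _ h0.ne'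
  have hkey : ∀ (w : Config (L + L' + 2) → ℝ), w T = 1 →
      expect ρ (fun σ => f₀ σ * w σ) = 1 := by
    intro w hw
    unfold _root_.expect
    have he : ∀ σ : Config (L + L' + 2), bern ρ σ * (f₀ σ * w σ)
        = if σ = T then bern ρ T * ((ρ ^ (L + L' + 2))⁻¹ * w T) else 0 := by
      intro σ
      by_cases h : σ = T
      · subst h; rw [hf₀]; simp
      · rw [if_neg h, hf₀]; simp [h]
    rw [Finset.sum_congr rfl fun σ _ => he σ, Finset.sum_ite_eq' Finset.univ T]
    rw [if_pos (Finset.mem_univ T), hw, bern_allTrue h0]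
    field_simp
  refine ⟨dirichlet KCM.fa2 ρ (fun η => Real.sqrt (f₀ η)), f₀, ?_, ?_, ?_, rfl⟩
  · intro η; rw [hf₀]; dsimp only; split
    · positivity
    · exact le_rfl
  · have := hkey (fun _ => 1) rfl
    simpa using this
  · have := hkey (fun σ => occ σ ⟨L, by omega⟩ * occ σ ⟨L + 1, by omega⟩) (by unfold occ; simp [hT])
    calc expect ρ (fun η => f₀ η * occ η ⟨L, by omega⟩ * occ η ⟨L + 1, by omega⟩)
        = expect ρ (fun σ => f₀ σ * (occ σ ⟨L, by omega⟩ * occ σ ⟨L + 1, by omega⟩)) := by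
          unfold _root_.expect; exact Finset.sum_congr rfl fun σ _ => by ring
      _ = 1 := this

lemma SigmaTwo_nonneg (h0 : 0 < ρ) (h1 : ρ < 1) (L L' : ℕ) : 0 ≤ SigmaTwo ρ L L' := by
  apply Real.sInf_nonneg
  rintro x ⟨f, hf0, _, _, rfl⟩
  exact dirichlet_fa2_nonneg h0.le h1.le _

end Sigma

lemma supp_of_constraint {ρ : ℝ} (h0 : 0 < ρ) (h1 : ρ < 1) {L L' : ℕ}
    {f : Config (L + L' + 2) → ℝ}
    (hf0 : ∀ η, 0 ≤ f η) (hf1 : expect ρ f = 1)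
    (hcon : expect ρ (fun η => f η * occ η ⟨L, by omega⟩ * occ η ⟨L + 1, by omega⟩) = 1) :
    ∀ σ : Config (L + L' + 2), f σ ≠ 0 →
      σ ⟨L, by omega⟩ = true ∧ σ ⟨L + 1, by omega⟩ = true := by
  have hzero : expect ρ
      (fun η => f η * (1 - occ η ⟨L, by omega⟩ * occ η ⟨L + 1, by omega⟩)) = 0 := by
    unfold _root_.expect at hf1 hcon ⊢
    have he : ∀ η : Config (L + L' + 2),
        bern ρ η * (f η * (1 - occ η ⟨L, by omega⟩ * occ η ⟨L + 1, by omega⟩))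
        = bern ρ η * f η
          - bern ρ η * (f η * occ η ⟨L, by omega⟩ * occ η ⟨L + 1, by omega⟩) := by
      intro η; ring
    rw [Finset.sum_congr rfl fun η _ => he η, Finset.sum_sub_distrib, hf1, hcon, sub_self]
  have hterm : ∀ η : Config (L + L' + 2),
      0 ≤ bern ρ η * (f η * (1 - occ η ⟨L, by omega⟩ * occ η ⟨L + 1, by omega⟩)) := by
    intro η
    apply mul_nonneg (bern_nonneg h0.le h1.le η)
    apply mul_nonneg (hf0 η)
    unfold occ; split_ifs <;> norm_num
  have hall := (Finset.sum_eq_zero_iff_of_nonneg (fun η _ => hterm η)).1 hzero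
  intro σ hσ
  have h := hall σ (Finset.mem_univ σ)
  have hb := bern_pos h0 h1 σ
  have h2 : f σ * (1 - occ σ ⟨L, by omega⟩ * occ σ ⟨L + 1, by omega⟩) = 0 := by
    rcases mul_eq_zero.1 h with h' | h'
    · exact absurd h' hb.ne'
    · exact h'
  have h3 : 1 - occ σ ⟨L, by omega⟩ * occ σ ⟨L + 1, by omega⟩ = 0 := by
    rcases mul_eq_zero.1 h2 with h' | h'
    · exact absurd h' hσ
    · exact h'
  constructor
  · by_contra hx
    have hocc : occ σ ⟨L, by omega⟩ = 0 := by unfold occ; rw [if_neg hx]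
    rw [hocc, zero_mul, sub_zero] at h3
    exact one_ne_zero h3
  · by_contra hx
    have hocc : occ σ ⟨L + 1, by omega⟩ = 0 := by unfold occ; rw [if_neg hx]
    rw [hocc, mul_zero, sub_zero] at h3
    exact one_ne_zero h3


/-- **Lemma 5.2** (lower bound in the inactive regime). For FA-1f with two empty
boundaries at density `ρ ∈ (0,1)` and every `α < 0`,
`liminf_{N→∞} φ^{(N)}(α/N) ≥ −Σ`, where `Σ` is the two-boundary interface energy. -/
theorem inactive_regime_lower_bound_fa2 (ρ : ℝ) (hρ0 : 0 < ρ) (hρ1 : ρ < 1)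
    (Sg : ℝ) (S : ℕ → ℝ)
    (hS : ∀ L : ℕ, Filter.Tendsto (fun L' : ℕ => SigmaTwo ρ L L') Filter.atTop (nhds (S L)))
    (hSg : Filter.Tendsto S Filter.atTop (nhds Sg))
    (α : ℝ) (hα : α < 0) :
    -Sg ≤ Filter.liminf (fun N : ℕ => phi KCM.fa2 ρ N (α / N)) Filter.atTop := by
  set v : ℕ → ℝ := fun N : ℕ => phi KCM.fa2 ρ N (α / N) with hv
  have hstep : ∀ (L L'' : ℕ), -SigmaTwo ρ L L'' ≤ Filter.liminf v Filter.atTop := by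
    intro L L''
    have hse : ∀ ε : ℝ, 0 < ε → -(SigmaTwo ρ L L'' + ε) ≤ Filter.liminf v Filter.atTop := by
      intro ε hε
      obtain ⟨x, hxmem, hxlt⟩ := Real.lt_sInf_add_pos (SigmaTwo_set_nonempty hρ0 hρ1 L L'') hε
      obtain ⟨f, hf0, hf1, hcon, hxval⟩ := hxmem
      have hsupp := supp_of_constraint hρ0 hρ1 hf0 hf1 hcon
      set D := dirichlet KCM.fa2 ρ (fun σ => Real.sqrt (f σ)) with hD
      set u : ℕ → ℝ := fun N =>
        (Real.exp (α / N) - 1) * ((L + L'' + 2 : ℕ) : ℝ) - Real.exp (α / N) * D with hu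
      have hexp : Filter.Tendsto (fun N : ℕ => Real.exp (α / N)) Filter.atTop (nhds 1) := by
        have h2 := (Real.continuous_exp.tendsto 0).comp (tendsto_const_div_atTop_nhds_zero_nat α)
        rw [Real.exp_zero] at h2
        exact h2
      have hut : Filter.Tendsto u Filter.atTop (nhds (-D)) := by
        have := ((hexp.sub_const 1).mul_const ((L + L'' + 2 : ℕ) : ℝ)).sub (hexp.mul_const D)
        rw [show (1 - 1) * ((L + L'' + 2 : ℕ) : ℝ) - 1 * D = -D by ring] at this
        exact this
      have hev : ∀ᶠ N in Filter.atTop, u N ≤ v N := by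
        filter_upwards [Filter.eventually_ge_atTop (L + L'' + 2)] with N hN
        obtain ⟨B, rfl⟩ : ∃ B, N = L + L'' + 2 + B := ⟨N - (L + L'' + 2), by omega⟩
        have hlam : α / ((L + L'' + 2 + B : ℕ) : ℝ) < 0 :=
          div_neg_of_neg_of_pos hα (by positivity)
        exact core_bound hρ0 hρ1 hf0 hf1 hsupp _ hlam
      have h1 : -D ≤ Filter.liminf v Filter.atTop := by
        rw [← hut.liminf_eq]
        have hcob : Filter.IsCoboundedUnder (· ≥ ·) Filter.atTop v := by
          apply Filter.IsBoundedUnder.isCoboundedUnder_ge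
          refine ⟨0, ?_⟩
          rw [Filter.eventually_map]
          filter_upwards [Filter.eventually_ge_atTop 1] with N hN
          have hlam : α / (N : ℝ) < 0 :=
            div_neg_of_neg_of_pos hα (by positivity)
          exact phi_nonpos hρ0 hρ1 _ hlam
        exact Filter.liminf_le_liminf hev hut.isBoundedUnder_ge hcob
      have hxlt' : D < SigmaTwo ρ L L'' + ε := by rw [hxval] at hxlt; exact hxlt
      linarith
    by_contra hcon2
    push_neg at hcon2
    have := hse ((-SigmaTwo ρ L L'' - Filter.liminf v Filter.atTop) / 2) (by linarith)
    linarith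
  have hL : ∀ L : ℕ, -S L ≤ Filter.liminf v Filter.atTop := by
    intro L
    exact le_of_tendsto (hS L).neg (Filter.Eventually.of_forall (fun L'' => hstep L L''))
  exact le_of_tendsto hSg.neg (Filter.Eventually.of_forall hL)
end

section
/- Lemma 5.5 (approximation of the one-boundary interface energy). For the East model and for the FA-1f model with one empty (right) boundary at density ρ∈(0,1), let L≥1 be an integer and u∈(0,1). Then for every f:Ω_L→[0,∞) with ν(f)=1 and ν(f·η_1η_2) ≥ 1−u, one has 𝒟_L(√f) ≥ Σ_L − (4√(ρ(1−ρ)) + Σ_L)·u. -/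
open Finset Filter

open scoped Classical

section AuxLemmas

variable {N : ℕ}

lemma aux_bern_nonneg {ρ : ℝ} (h0 : 0 ≤ ρ) (h1 : ρ ≤ 1) (η : Config N) : 0 ≤ bern ρ η :=
  Finset.prod_nonneg fun i _ => by by_cases h : η i <;> simp [h] <;> linarith

lemma aux_occAt01 {η : Config N} {bl br : ℝ} (hbl : bl = 0 ∨ bl = 1) (hbr : br = 0 ∨ br = 1)
    (k : ℕ) : occAt η bl br k = 0 ∨ occAt η bl br k = 1 := by
  unfold occAt
  split_ifs with h1 h2 h3
  · exact hbl
  · right; rfl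
  · left; rfl
  · exact hbr

lemma aux_constr_nonneg (m : KCM) (η : Config N) (i : Fin N) : 0 ≤ constr m η i := by
  cases m
  · rcases aux_occAt01 (η := η) (Or.inl rfl) (Or.inl rfl) (i.1 + 2) with h | h <;>
      simp [constr, h]
  · rcases aux_occAt01 (η := η) (Or.inl rfl) (Or.inl rfl) i.1 with h | h <;>
      rcases aux_occAt01 (η := η) (Or.inl rfl) (Or.inl rfl) (i.1 + 2) with h' | h' <;>
      simp [constr, h, h']
  · rcases aux_occAt01 (η := η) (Or.inr rfl) (Or.inl rfl) i.1 with h | h <;>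
      rcases aux_occAt01 (η := η) (Or.inr rfl) (Or.inl rfl) (i.1 + 2) with h' | h' <;>
      simp [constr, h, h']

lemma aux_crate_nonneg {ρ : ℝ} (h0 : 0 ≤ ρ) (h1 : ρ ≤ 1) (m : KCM) (η : Config N) (i : Fin N) :
    0 ≤ crate m ρ η i := by
  refine mul_nonneg (aux_constr_nonneg m η i) ?_
  by_cases h : η i <;> simp [h] <;> linarith

lemma aux_flip_flip (η : Config N) (i : Fin N) : flipAt (flipAt η i) i = η := by
  funext j
  by_cases h : j = i
  · subst h; simp [flipAt]
  · simp [flipAt, Function.update_of_ne h]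

lemma aux_flip_ne (η : Config N) {i j : Fin N} (h : j ≠ i) : flipAt η i j = η j :=
  Function.update_of_ne h _ _

lemma aux_flip_same (η : Config N) (i : Fin N) : flipAt η i i = !η i :=
  Function.update_self _ _ _

lemma aux_sum_flip (i : Fin N) (F : Config N → ℝ) :
    ∑ η : Config N, F η = ∑ η : Config N, F (flipAt η i) :=
  (Fintype.sum_bijective (fun η => flipAt η i)
    (Function.Involutive.bijective fun η => aux_flip_flip η i)
    (fun η => F (flipAt η i)) F (fun _ => rfl)).symm

lemma aux_db (ρ : ℝ) (η : Config N) (i : Fin N) :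
    bern ρ (flipAt η i) * (if flipAt η i i then 1 - ρ else ρ)
      = bern ρ η * (if η i then 1 - ρ else ρ) := by
  unfold bern
  rw [Fintype.prod_eq_mul_prod_compl i, Fintype.prod_eq_mul_prod_compl i]
  have hP : ∏ j ∈ {i}ᶜ, (if flipAt η i j then ρ else 1 - ρ)
      = ∏ j ∈ {i}ᶜ, (if η j then ρ else 1 - ρ) := by
    refine Finset.prod_congr rfl fun j hj => ?_
    rw [aux_flip_ne η (Finset.mem_compl.mp hj ∘ Finset.mem_singleton.mpr)]
  rw [hP, aux_flip_same]
  by_cases h : η i <;> simp [h] <;> ring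

end AuxLemmas

set_option maxHeartbeats 2000000 in
/-- **Lemma 5.5** (approximation of the one-boundary interface energy). For the
East model and the FA-1f model with one empty (right) boundary at density
`ρ ∈ (0,1)`, `L ≥ 1` and `u ∈ (0,1)`: every probability density `f` on `Ω_L` with
`ν(f·η_1η_2) ≥ 1−u` satisfies `𝒟_L(√f) ≥ Σ_L − (4√(ρ(1−ρ)) + Σ_L)·u`. -/
theorem sigmaOne_approx (ρ : ℝ) (hρ0 : 0 < ρ) (hρ1 : ρ < 1) :
    ∀ m : KCM, m = KCM.east ∨ m = KCM.fa1 →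
    ∀ L : ℕ, 1 ≤ L → ∀ u : ℝ, 0 < u → u < 1 →
    ∀ f : Config L → ℝ, (∀ η, 0 ≤ f η) → expect ρ f = 1 →
      1 - u ≤ expect ρ (fun η => f η * occAt η 0 0 1 * occAt η 0 0 2) →
      SigmaOne m ρ L - (4 * Real.sqrt (ρ * (1 - ρ)) + SigmaOne m ρ L) * u
        ≤ dirichlet m ρ (fun η => Real.sqrt (f η)) := by
  intro m hm L hL u hu0 hu1 f hf0 hfexp hfu
  by_cases hL2 : 2 ≤ L
  swap
  · exfalso
    have hocc2 : ∀ η : Config L, occAt η 0 0 2 = 0 := by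
      intro η; unfold occAt; rw [dif_neg (by omega), dif_neg (by omega)]
    have hz : expect ρ (fun η => f η * occAt η 0 0 1 * occAt η 0 0 2) = 0 := by
      refine Finset.sum_eq_zero fun η _ => ?_
      show bern ρ η * (f η * occAt η 0 0 1 * occAt η 0 0 2) = 0
      rw [hocc2]; ring
    rw [hz] at hfu; linarith
  -- setup
  set i0 : Fin L := ⟨0, by omega⟩ with hi0
  set i1 : Fin L := ⟨1, by omega⟩ with hi1
  have hne10 : i1 ≠ i0 := by simp [hi0, hi1, Fin.ext_iff]
  have hbn : ∀ η : Config L, 0 ≤ bern ρ η := aux_bern_nonneg hρ0.le hρ1.le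
  have hcn : ∀ (η : Config L) (i : Fin L), 0 ≤ crate m ρ η i :=
    fun η i => aux_crate_nonneg hρ0.le hρ1.le m η i
  have hocc1 : ∀ η : Config L, occAt η 0 0 1 = (if η i0 then (1:ℝ) else 0) := by
    intro η; unfold occAt; rw [dif_neg (by omega), dif_pos (by omega)]
  have hocc2 : ∀ η : Config L, occAt η 0 0 2 = (if η i1 then (1:ℝ) else 0) := by
    intro η; unfold occAt; rw [dif_neg (by omega), dif_pos (by omega)]
  have hconstr0 : ∀ η : Config L, constr m η i0 = 1 - (if η i1 then (1:ℝ) else 0) := by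
    intro η
    rcases hm with h | h <;> subst h
    · show (1:ℝ) - occAt η 0 0 2 = _
      rw [hocc2]
    · show (1:ℝ) - occAt η 1 0 0 * occAt η 1 0 2 = _
      have h0 : occAt η 1 0 0 = 1 := by unfold occAt; rw [dif_pos rfl]
      have h2 : occAt η 1 0 2 = (if η i1 then (1:ℝ) else 0) := by
        unfold occAt; rw [dif_neg (by omega), dif_pos (by omega)]
      rw [h0, h2, one_mul]
  -- the weight at site i0
  set W : Config L → ℝ := fun η => bern ρ η * crate m ρ η i0 with hWdef
  have hW : ∀ η : Config L,
      W η = bern ρ η * ((1 - (if η i1 then (1:ℝ) else 0)) * (if η i0 then 1 - ρ else ρ)) := by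
    intro η
    show bern ρ η * crate m ρ η i0 = _
    unfold crate
    rw [hconstr0 η]
  have hWn : ∀ η : Config L, 0 ≤ W η := fun η => mul_nonneg (hbn η) (hcn η i0)
  have hWflip : ∀ η : Config L, W (flipAt η i0) = W η := by
    intro η
    rw [hW, hW]
    have h1 : flipAt η i0 i1 = η i1 := aux_flip_ne η hne10
    rw [h1]
    have := aux_db ρ η i0
    calc bern ρ (flipAt η i0) * ((1 - (if η i1 then (1:ℝ) else 0))
            * (if flipAt η i0 i0 then 1 - ρ else ρ))
        = (1 - (if η i1 then (1:ℝ) else 0))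
            * (bern ρ (flipAt η i0) * (if flipAt η i0 i0 then 1 - ρ else ρ)) := by ring
      _ = (1 - (if η i1 then (1:ℝ) else 0)) * (bern ρ η * (if η i0 then 1 - ρ else ρ)) := by
            rw [this]
      _ = bern ρ η * ((1 - (if η i1 then (1:ℝ) else 0)) * (if η i0 then 1 - ρ else ρ)) := by
            ring
  -- rewrite the main hypothesis
  set E : ℝ := expect ρ (fun η => f η * (if η i0 then (1:ℝ) else 0) * (if η i1 then (1:ℝ) else 0))
    with hEdef
  have hE : 1 - u ≤ E := by
    rw [hEdef]
    convert hfu using 3 with η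
    rw [hocc1, hocc2]
  -- a = ν(f · η_1)
  set a : ℝ := expect ρ (fun η => f η * (if η i0 then (1:ℝ) else 0)) with hadef
  have hEa : E ≤ a := by
    rw [hEdef, hadef]
    refine Finset.sum_le_sum fun η _ => ?_
    refine mul_le_mul_of_nonneg_left ?_ (hbn η)
    by_cases h0 : η i0 <;> by_cases h1 : η i1 <;>
      simp [h0, h1] <;> exact hf0 η
  have ha_pos : 0 < a := by linarith
  have ha1u : 1 - u ≤ a := by linarith
  -- the conditioned density
  set fh : Config L → ℝ := fun η => if η i0 then f η / a else 0 with hfhdef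
  have hfh0 : ∀ η, 0 ≤ fh η := by
    intro η; rw [hfhdef]
    by_cases h0 : η i0 <;> simp [h0]
    exact div_nonneg (hf0 η) ha_pos.le
  have hfh_exp : expect ρ fh = 1 := by
    have h1 : ∀ η : Config L, bern ρ η * fh η
        = bern ρ η * (f η * (if η i0 then (1:ℝ) else 0)) / a := by
      intro η; rw [hfhdef]
      by_cases h0 : η i0 <;> simp [h0] <;> ring
    show (∑ η : Config L, bern ρ η * fh η) = 1
    rw [Finset.sum_congr rfl fun η _ => h1 η, ← Finset.sum_div]
    have h2 : ∑ η : Config L, bern ρ η * (f η * (if η i0 then (1:ℝ) else 0)) = a := by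
      rw [hadef]; rfl
    rw [h2, div_self ha_pos.ne']
  have hfh_occ : expect ρ (fun η => fh η * occAt η 0 0 1) = 1 := by
    rw [← hfh_exp]
    show (∑ η : Config L, _) = ∑ η : Config L, _
    refine Finset.sum_congr rfl fun η _ => ?_
    show bern ρ η * (fh η * occAt η 0 0 1) = bern ρ η * fh η
    rw [hocc1, hfhdef]
    by_cases h0 : η i0 <;> simp [h0]
  set g : Config L → ℝ := fun η => Real.sqrt (fh η) with hgdef
  have hg : ∀ η, g η = (if η i0 then Real.sqrt (f η) / Real.sqrt a else 0) := by
    intro η; rw [hgdef, hfhdef]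
    by_cases h0 : η i0 <;> simp [h0]
    exact Real.sqrt_div (hf0 η) a
  set Dg : ℝ := dirichlet m ρ g with hDgdef
  set D : ℝ := dirichlet m ρ (fun η => Real.sqrt (f η)) with hDdef
  -- Sigma bounds
  have hmem : Dg ∈ { x | ∃ f : Config L → ℝ, (∀ η, 0 ≤ f η) ∧ expect ρ f = 1 ∧
      expect ρ (fun η => f η * occAt η 0 0 1) = 1 ∧
      x = dirichlet m ρ (fun η => Real.sqrt (f η)) } :=
    ⟨fh, hfh0, hfh_exp, hfh_occ, by rw [hDgdef, hgdef]⟩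
  have hDnn : ∀ h : Config L → ℝ, 0 ≤ dirichlet m ρ h := by
    intro h
    refine Finset.sum_nonneg fun i _ => Finset.sum_nonneg fun η _ => ?_
    exact mul_nonneg (hbn η) (mul_nonneg (hcn η i) (sq_nonneg _))
  have hSig_le : SigmaOne m ρ L ≤ Dg := by
    refine csInf_le ⟨0, fun x hx => ?_⟩ hmem
    obtain ⟨f', _, _, _, rfl⟩ := hx
    exact hDnn _
  have hSig_nn : 0 ≤ SigmaOne m ρ L := by
    refine le_csInf ⟨Dg, hmem⟩ fun x hx => ?_
    obtain ⟨f', _, _, _, rfl⟩ := hx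
    exact hDnn _
  -- Key inequality: a * Dg ≤ D + 4 √(ρ(1-ρ)) u
  -- notation for single-site Dirichlet terms
  have hsq : ∀ x : ℝ, 0 ≤ x → Real.sqrt x ^ 2 = x := fun x hx => Real.sq_sqrt hx
  -- terms away from i0
  have hterm : ∀ i ∈ Finset.univ.erase i0,
      a * expect ρ (fun η => crate m ρ η i * (g (flipAt η i) - g η) ^ 2)
        ≤ expect ρ (fun η => crate m ρ η i * (Real.sqrt (f (flipAt η i)) - Real.sqrt (f η)) ^ 2) := by
    intro i hi
    have hne : i0 ≠ i := (Finset.mem_erase.mp hi).1.symm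
    show a * (∑ η : Config L, _) ≤ ∑ η : Config L, _
    rw [Finset.mul_sum]
    refine Finset.sum_le_sum fun η _ => ?_
    have hflip0 : flipAt η i i0 = η i0 := aux_flip_ne η hne
    have hkey : a * (g (flipAt η i) - g η) ^ 2
        ≤ (Real.sqrt (f (flipAt η i)) - Real.sqrt (f η)) ^ 2 := by
      rw [hg, hg, hflip0]
      by_cases h0 : η i0
      · simp only [h0, if_true]
        rw [div_sub_div_same, div_pow, hsq a ha_pos.le]
        rw [mul_div_cancel₀ _ ha_pos.ne']
      · simp only [h0, if_false]
        simpa using sq_nonneg (Real.sqrt (f (flipAt η i)) - Real.sqrt (f η))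
    calc a * (bern ρ η * (crate m ρ η i * (g (flipAt η i) - g η) ^ 2))
        = (bern ρ η * crate m ρ η i) * (a * (g (flipAt η i) - g η) ^ 2) := by ring
      _ ≤ (bern ρ η * crate m ρ η i)
            * (Real.sqrt (f (flipAt η i)) - Real.sqrt (f η)) ^ 2 :=
          mul_le_mul_of_nonneg_left hkey (mul_nonneg (hbn η) (hcn η i))
      _ = bern ρ η * (crate m ρ η i
            * (Real.sqrt (f (flipAt η i)) - Real.sqrt (f η)) ^ 2) := by ring
  -- sum forms
  have hEsum : E = ∑ η : Config L,
      bern ρ η * (f η * (if η i0 then (1:ℝ) else 0) * (if η i1 then (1:ℝ) else 0)) := by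
    rw [hEdef]; rfl
  have hfsum : (∑ η : Config L, bern ρ η * f η) = 1 := hfexp
  have ha1 : a ≤ 1 := by
    have hle : a ≤ ∑ η : Config L, bern ρ η * f η := by
      rw [hadef]
      refine Finset.sum_le_sum fun η _ => ?_
      refine mul_le_mul_of_nonneg_left ?_ (hbn η)
      by_cases h0 : η i0 <;> simp [h0, hf0 η]
    rw [hfsum] at hle
    exact hle
  -- the three site-i0 sums
  set S1 : ℝ := ∑ η : Config L, W η * (if η i0 then f η else 0) with hS1def
  set S2 : ℝ := ∑ η : Config L, W η * (if η i0 then f (flipAt η i0) else 0) with hS2def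
  set S3 : ℝ := ∑ η : Config L,
    W η * (if η i0 then Real.sqrt (f η) * Real.sqrt (f (flipAt η i0)) else 0) with hS3def
  have hS1nn : 0 ≤ S1 := by
    rw [hS1def]
    refine Finset.sum_nonneg fun η _ => mul_nonneg (hWn η) ?_
    by_cases h0 : η i0 <;> simp [h0, hf0 η]
  have hS2nn : 0 ≤ S2 := by
    rw [hS2def]
    refine Finset.sum_nonneg fun η _ => mul_nonneg (hWn η) ?_
    by_cases h0 : η i0 <;> simp [h0, hf0 (flipAt η i0)]
  have hS3nn : 0 ≤ S3 := by
    rw [hS3def]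
    refine Finset.sum_nonneg fun η _ => mul_nonneg (hWn η) ?_
    by_cases h0 : η i0 <;> simp [h0]
    exact mul_nonneg (Real.sqrt_nonneg _) (Real.sqrt_nonneg _)
  -- a * T̂_{i0} = 2 S1
  have hT0hat : a * expect ρ (fun η => crate m ρ η i0 * (g (flipAt η i0) - g η) ^ 2)
      = 2 * S1 := by
    have hsqa : Real.sqrt a ^ 2 = a := Real.sq_sqrt ha_pos.le
    have hpt : ∀ η : Config L,
        a * (bern ρ η * (crate m ρ η i0 * (g (flipAt η i0) - g η) ^ 2))
          = W η * (if η i0 then f η else f (flipAt η i0)) := by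
      intro η
      by_cases h0 : η i0
      · have hgf : g (flipAt η i0) = 0 := by
          rw [hg]; simp [aux_flip_same, h0]
        have he : (g (flipAt η i0) - g η) ^ 2 = f η / a := by
          rw [hgf, hg η]
          simp only [h0, if_true]
          rw [zero_sub, neg_sq, div_pow, Real.sq_sqrt (hf0 η), hsqa]
        rw [he]
        simp only [h0, if_true]
        show a * (bern ρ η * (crate m ρ η i0 * (f η / a)))
            = bern ρ η * crate m ρ η i0 * f η
        field_simp
      · have hgη : g η = 0 := by rw [hg]; simp [h0]
        have hgf : g (flipAt η i0)
            = Real.sqrt (f (flipAt η i0)) / Real.sqrt a := by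
          rw [hg]; simp [aux_flip_same, h0]
        have he : (g (flipAt η i0) - g η) ^ 2 = f (flipAt η i0) / a := by
          rw [hgη, hgf, sub_zero, div_pow, Real.sq_sqrt (hf0 _), hsqa]
        rw [he]
        simp only [h0, if_false]
        show a * (bern ρ η * (crate m ρ η i0 * (f (flipAt η i0) / a)))
            = bern ρ η * crate m ρ η i0 * f (flipAt η i0)
        field_simp
    show a * (∑ η : Config L,
        bern ρ η * (crate m ρ η i0 * (g (flipAt η i0) - g η) ^ 2)) = 2 * S1
    rw [Finset.mul_sum, Finset.sum_congr rfl fun η _ => hpt η]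
    have hsplit : ∀ η : Config L, W η * (if η i0 then f η else f (flipAt η i0))
        = W η * (if η i0 then f η else 0)
          + W η * (if η i0 then 0 else f (flipAt η i0)) := by
      intro η; by_cases h0 : η i0 <;> simp [h0]
    rw [Finset.sum_congr rfl fun η _ => hsplit η, Finset.sum_add_distrib]
    have hre : (∑ η : Config L, W η * (if η i0 then 0 else f (flipAt η i0))) = S1 := by
      rw [aux_sum_flip i0 (fun η => W η * (if η i0 then 0 else f (flipAt η i0))), hS1def]
      refine Finset.sum_congr rfl fun η _ => ?_
      show W (flipAt η i0)
          * (if flipAt η i0 i0 then 0 else f (flipAt (flipAt η i0) i0)) = _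
      rw [hWflip, aux_flip_flip, aux_flip_same]
      by_cases h0 : η i0 <;> simp [h0]
    rw [hre, hS1def]
    ring
  -- reflection identity for the square terms
  have hQ : (∑ η : Config L, W η * (if η i0 then 0
        else (Real.sqrt (f (flipAt η i0)) - Real.sqrt (f η)) ^ 2))
      = ∑ η : Config L, W η * (if η i0
        then (Real.sqrt (f (flipAt η i0)) - Real.sqrt (f η)) ^ 2 else 0) := by
    rw [aux_sum_flip i0 (fun η => W η * (if η i0 then 0
        else (Real.sqrt (f (flipAt η i0)) - Real.sqrt (f η)) ^ 2))]
    refine Finset.sum_congr rfl fun η _ => ?_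
    show W (flipAt η i0) * (if flipAt η i0 i0 then 0
        else (Real.sqrt (f (flipAt (flipAt η i0) i0)) - Real.sqrt (f (flipAt η i0))) ^ 2) = _
    rw [hWflip, aux_flip_flip, aux_flip_same]
    by_cases h0 : η i0
    · rw [if_neg (by simp [h0]), if_pos h0]
      ring
    · rw [if_pos (by simp [h0]), if_neg h0]
  -- T_{i0} = 2 Q
  have hT0 : expect ρ (fun η => crate m ρ η i0
        * (Real.sqrt (f (flipAt η i0)) - Real.sqrt (f η)) ^ 2)
      = 2 * ∑ η : Config L, W η * (if η i0
        then (Real.sqrt (f (flipAt η i0)) - Real.sqrt (f η)) ^ 2 else 0) := by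
    show (∑ η : Config L, bern ρ η * (crate m ρ η i0
        * (Real.sqrt (f (flipAt η i0)) - Real.sqrt (f η)) ^ 2)) = _
    have hsplit : ∀ η : Config L, bern ρ η * (crate m ρ η i0
          * (Real.sqrt (f (flipAt η i0)) - Real.sqrt (f η)) ^ 2)
        = W η * (if η i0 then (Real.sqrt (f (flipAt η i0)) - Real.sqrt (f η)) ^ 2 else 0)
          + W η * (if η i0 then 0
            else (Real.sqrt (f (flipAt η i0)) - Real.sqrt (f η)) ^ 2) := by
      intro η
      by_cases h0 : η i0 <;> simp [h0, hWdef] <;> ring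
    rw [Finset.sum_congr rfl fun η _ => hsplit η, Finset.sum_add_distrib, hQ]
    ring
  -- S1 ≤ Q + 2 S3
  have hS1Q : S1 ≤ (∑ η : Config L, W η * (if η i0
        then (Real.sqrt (f (flipAt η i0)) - Real.sqrt (f η)) ^ 2 else 0)) + 2 * S3 := by
    rw [hS1def, hS3def, Finset.mul_sum, ← Finset.sum_add_distrib]
    refine Finset.sum_le_sum fun η _ => ?_
    by_cases h0 : η i0
    · simp only [h0, if_true]
      have e1 : Real.sqrt (f η) ^ 2 = f η := Real.sq_sqrt (hf0 η)
      have e2 : Real.sqrt (f (flipAt η i0)) ^ 2 = f (flipAt η i0) :=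
        Real.sq_sqrt (hf0 _)
      have hx : f η ≤ (Real.sqrt (f (flipAt η i0)) - Real.sqrt (f η)) ^ 2
          + 2 * (Real.sqrt (f η) * Real.sqrt (f (flipAt η i0))) := by
        nlinarith [hf0 (flipAt η i0)]
      nlinarith [mul_le_mul_of_nonneg_left hx (hWn η)]
    · simp [h0]
  -- Cauchy–Schwarz : S3² ≤ S1 S2
  have hS3sq : S3 ^ 2 ≤ S1 * S2 := by
    have hcs := Finset.sum_mul_sq_le_sq_mul_sq Finset.univ
      (fun η : Config L => if η i0 then Real.sqrt (W η * f η) else 0)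
      (fun η : Config L => if η i0 then Real.sqrt (W η * f (flipAt η i0)) else 0)
    have e1 : (∑ η : Config L, (if η i0 then Real.sqrt (W η * f η) else 0)
        * (if η i0 then Real.sqrt (W η * f (flipAt η i0)) else 0)) = S3 := by
      rw [hS3def]
      refine Finset.sum_congr rfl fun η _ => ?_
      by_cases h0 : η i0
      · simp only [h0, if_true]
        rw [Real.sqrt_mul (hWn η), Real.sqrt_mul (hWn η)]
        calc Real.sqrt (W η) * Real.sqrt (f η)
              * (Real.sqrt (W η) * Real.sqrt (f (flipAt η i0)))
            = (Real.sqrt (W η) * Real.sqrt (W η))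
              * (Real.sqrt (f η) * Real.sqrt (f (flipAt η i0))) := by ring
          _ = W η * (Real.sqrt (f η) * Real.sqrt (f (flipAt η i0))) := by
              rw [Real.mul_self_sqrt (hWn η)]
      · simp [h0]
    have e2 : (∑ η : Config L, (if η i0 then Real.sqrt (W η * f η) else 0) ^ 2) = S1 := by
      rw [hS1def]
      refine Finset.sum_congr rfl fun η _ => ?_
      by_cases h0 : η i0
      · simp only [h0, if_true]
        exact Real.sq_sqrt (mul_nonneg (hWn η) (hf0 η))
      · simp [h0]
    have e3 : (∑ η : Config L,
        (if η i0 then Real.sqrt (W η * f (flipAt η i0)) else 0) ^ 2) = S2 := by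
      rw [hS2def]
      refine Finset.sum_congr rfl fun η _ => ?_
      by_cases h0 : η i0
      · simp only [h0, if_true]
        exact Real.sq_sqrt (mul_nonneg (hWn η) (hf0 _))
      · simp [h0]
    rw [e1, e2, e3] at hcs
    exact hcs
  -- bounds on S1, S2
  have hS1b : S1 ≤ (1 - ρ) * (1 - E) := by
    have key : S1 + (1 - ρ) * E ≤ (1 - ρ) * ∑ η : Config L, bern ρ η * f η := by
      rw [hS1def, hEsum, Finset.mul_sum, Finset.mul_sum, ← Finset.sum_add_distrib]
      refine Finset.sum_le_sum fun η _ => ?_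
      rw [hW]
      by_cases h0 : η i0 <;> by_cases h1 : η i1 <;> simp [h0, h1] <;>
        nlinarith [mul_nonneg (hbn η) (hf0 η), hρ0, hρ1]
    rw [hfsum] at key
    nlinarith [key]
  have hS2b : S2 ≤ ρ * (1 - E) := by
    have hre : S2 = ∑ η : Config L, W η * (if η i0 then 0 else f η) := by
      rw [hS2def, aux_sum_flip i0 (fun η => W η * (if η i0 then f (flipAt η i0) else 0))]
      refine Finset.sum_congr rfl fun η _ => ?_
      show W (flipAt η i0)
          * (if flipAt η i0 i0 then f (flipAt (flipAt η i0) i0) else 0) = _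
      rw [hWflip, aux_flip_flip, aux_flip_same]
      by_cases h0 : η i0 <;> simp [h0]
    have key : S2 + ρ * E ≤ ρ * ∑ η : Config L, bern ρ η * f η := by
      rw [hre, hEsum, Finset.mul_sum, Finset.mul_sum, ← Finset.sum_add_distrib]
      refine Finset.sum_le_sum fun η _ => ?_
      rw [hW]
      by_cases h0 : η i0 <;> by_cases h1 : η i1 <;> simp [h0, h1] <;>
        nlinarith [mul_nonneg (hbn η) (hf0 η), hρ0, hρ1]
    rw [hfsum] at key
    nlinarith [key]
  have hEu : 1 - E ≤ u := by linarith
  have hEnn : 0 ≤ 1 - E := by linarith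
  have hS1u : S1 ≤ (1 - ρ) * u := by nlinarith [hS1b]
  have hS2u : S2 ≤ ρ * u := by nlinarith [hS2b]
  have hS3u : S3 ≤ Real.sqrt (ρ * (1 - ρ)) * u := by
    have h1 : S1 * S2 ≤ ((1 - ρ) * u) * (ρ * u) :=
      mul_le_mul hS1u hS2u hS2nn (by nlinarith)
    have h2 : S3 ^ 2 ≤ ρ * (1 - ρ) * u ^ 2 := by nlinarith [hS3sq]
    calc S3 = Real.sqrt (S3 ^ 2) := (Real.sqrt_sq hS3nn).symm
      _ ≤ Real.sqrt (ρ * (1 - ρ) * u ^ 2) := Real.sqrt_le_sqrt h2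
      _ = Real.sqrt (ρ * (1 - ρ)) * u := by
          rw [Real.sqrt_mul (by nlinarith) (u ^ 2), Real.sqrt_sq hu0.le]
  -- key inequality
  have hKey : a * Dg ≤ D + 4 * (Real.sqrt (ρ * (1 - ρ)) * u) := by
    have hA : a * expect ρ (fun η => crate m ρ η i0 * (g (flipAt η i0) - g η) ^ 2)
        ≤ expect ρ (fun η => crate m ρ η i0
            * (Real.sqrt (f (flipAt η i0)) - Real.sqrt (f η)) ^ 2)
          + 4 * (Real.sqrt (ρ * (1 - ρ)) * u) := by
      rw [hT0hat, hT0]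
      linarith [hS1Q, hS3u]
    have hB : a * ∑ i ∈ Finset.univ.erase i0,
          expect ρ (fun η => crate m ρ η i * (g (flipAt η i) - g η) ^ 2)
        ≤ ∑ i ∈ Finset.univ.erase i0, expect ρ (fun η => crate m ρ η i
            * (Real.sqrt (f (flipAt η i)) - Real.sqrt (f η)) ^ 2) := by
      rw [Finset.mul_sum]
      exact Finset.sum_le_sum hterm
    rw [hDgdef, hDdef]
    unfold dirichlet
    rw [← Finset.add_sum_erase _ _ (Finset.mem_univ i0),
      ← Finset.add_sum_erase _ _ (Finset.mem_univ i0), mul_add]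
    linarith [hA, hB]
  -- conclusion
  have h1 : a * SigmaOne m ρ L ≤ a * Dg := mul_le_mul_of_nonneg_left hSig_le ha_pos.le
  have h2 : (1 - u) * SigmaOne m ρ L ≤ a * SigmaOne m ρ L :=
    mul_le_mul_of_nonneg_right ha1u hSig_nn
  nlinarith [h1, h2, hKey, hSig_nn, Real.sqrt_nonneg (ρ * (1 - ρ))]
end
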